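/- arXiv:2504.01046 — 3 statements merged into one kernel-verified Lean document; each statement's English description precedes it below -/
import Mathlib

section
/- Let Ū ⊆ ℝ^m be a nontrivial subspace and β ∈ ℝ^m with β_i := sup { |u_i| : u ∈ Ū, ‖u‖₂ ≤ 1 } (the local coherences of the canonical basis with respect to Ū). Assume ‖β‖₂ ≥ 1. Let d̃ ∈ ℝ^m have strictly positive non-increasing entries and D̃ = Diag(d̃). Then the operator norm of D̃ composed with the orthogonal projection onto Ū satisfies ‖D̃ proj_Ū‖ ≤ ‖D̃ T(β)‖₂, where T(β) is the unit truncation of β. -/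
open Finset

/-- Sum of squares of the first `k` coordinates of `v`. -/
def psum {n : ℕ} (v : Fin n → ℝ) (k : ℕ) : ℝ :=
  ∑ i ∈ Finset.univ.filter (fun i : Fin n => i.val < k), (v i) ^ 2

/-- The truncation index `I`: the least `k` with `‖v|_[k]‖₂ ≥ 1`. -/
noncomputable def tIdx {n : ℕ} (v : Fin n → ℝ) : ℕ := sInf {k | 1 ≤ psum v k}

/-- The unit truncation operator. Coordinate `i : Fin n` corresponds to position `i.val + 1`. -/
noncomputable def utrunc {n : ℕ} (v : Fin n → ℝ) : Fin n → ℝ := fun i =>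
  if i.val + 1 < tIdx v then v i
  else if i.val + 1 = tIdx v then Real.sqrt (1 - psum v (tIdx v - 1))
  else 0

/-- Extend a vector on `Fin m` to `ℕ` by zero. -/
noncomputable def extz {m : ℕ} (v : Fin m → ℝ) : ℕ → ℝ :=
  fun k => if h : k < m then v ⟨k, h⟩ else 0

lemma extz_lt {m : ℕ} (v : Fin m → ℝ) {k : ℕ} (h : k < m) : extz v k = v ⟨k, h⟩ :=
  dif_pos h

lemma extz_ge {m : ℕ} (v : Fin m → ℝ) {k : ℕ} (h : m ≤ k) : extz v k = 0 :=
  dif_neg (by omega)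

lemma sum_fin_eq_sum_range_extz {m : ℕ} (v : Fin m → ℝ) :
    ∑ i, v i = ∑ k ∈ Finset.range m, extz v k := by
  rw [← Fin.sum_univ_eq_sum_range (extz v) m]
  exact Finset.sum_congr rfl fun i _ => by simp [extz, Fin.is_lt]

lemma psum_eq_sum_range {m : ℕ} (v : Fin m → ℝ) {k : ℕ} (hk : k ≤ m) :
    psum v k = ∑ i ∈ Finset.range k, extz (fun i => v i ^ 2) i := by
  calc psum v k
      = ∑ a : Fin m, (fun j => if j < k then extz (fun i => v i ^ 2) j else 0) (a : ℕ) := by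
        rw [psum, Finset.sum_filter]
        refine Finset.sum_congr rfl fun a _ => ?_
        by_cases h : (a : ℕ) < k
        · simp [h, extz, a.isLt]
        · simp [h]
    _ = ∑ j ∈ Finset.range m, (if j < k then extz (fun i => v i ^ 2) j else 0) :=
        Fin.sum_univ_eq_sum_range (fun j => if j < k then extz (fun i => v i ^ 2) j else 0) m
    _ = ∑ i ∈ Finset.range k, extz (fun i => v i ^ 2) i := by
        rw [← Finset.sum_filter]
        congr 1
        ext j
        simp only [Finset.mem_filter, Finset.mem_range]
        omega

/-- Abel-summation positivity: nonincreasing nonneg weights against a sequence with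
nonnegative partial sums. -/
lemma abel_nonneg (n : ℕ) (f g : ℕ → ℝ) (hf : ∀ i, 0 ≤ f i)
    (hfm : ∀ i, f (i + 1) ≤ f i)
    (hG : ∀ k, 0 ≤ ∑ i ∈ Finset.range k, g i) :
    0 ≤ ∑ i ∈ Finset.range n, f i * g i := by
  have h := Finset.sum_range_by_parts f g n
  simp only [smul_eq_mul] at h
  rw [h]
  have h1 : 0 ≤ f (n - 1) * ∑ i ∈ Finset.range n, g i := mul_nonneg (hf _) (hG _)
  have h2 : ∑ i ∈ Finset.range (n - 1), (f (i + 1) - f i) * ∑ j ∈ Finset.range (i + 1), g j ≤ 0 :=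
    Finset.sum_nonpos fun i _ =>
      mul_nonpos_of_nonpos_of_nonneg (by linarith [hfm i]) (hG _)
  linarith

/-- operator norm of a diagonal matrix composed with the orthogonal projection
onto an incoherent subspace.  The operator norm `‖D̃ proj_Ū‖` equals the supremum of
`‖D̃ u‖₂` over `u ∈ Ū` with `‖u‖₂ ≤ 1`. -/
theorem diag_on_incoherent_subspace
    {m : ℕ} (U : Submodule ℝ (Fin m → ℝ)) (hU : U ≠ ⊥)
    (β : Fin m → ℝ)
    (hβ : ∀ i, β i = sSup {t : ℝ | ∃ u ∈ U, (∑ j, (u j) ^ 2) ≤ 1 ∧ t = |u i|})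
    (hβnorm : 1 ≤ Real.sqrt (∑ i, (β i) ^ 2))
    (dt : Fin m → ℝ) (hdt : ∀ i, 0 < dt i)
    (hmono : ∀ i j : Fin m, i ≤ j → dt j ≤ dt i) :
    ∀ u ∈ U, (∑ j, (u j) ^ 2) ≤ 1 →
      Real.sqrt (∑ i, (dt i * u i) ^ 2) ≤ Real.sqrt (∑ i, (dt i * utrunc β i) ^ 2) := by
  intro u hu hun
  -- pointwise bound |u i| ≤ β i
  have habs : ∀ i, |u i| ≤ β i := by
    intro i
    rw [hβ i]
    have hbdd : BddAbove {t : ℝ | ∃ u ∈ U, (∑ j, (u j) ^ 2) ≤ 1 ∧ t = |u i|} := by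
      refine ⟨1, ?_⟩
      rintro t ⟨u', _, hle, rfl⟩
      have h1 : u' i ^ 2 ≤ 1 :=
        le_trans (Finset.single_le_sum (f := fun j => u' j ^ 2)
          (fun j _ => sq_nonneg _) (Finset.mem_univ i)) hle
      nlinarith [sq_abs (u' i), abs_nonneg (u' i)]
    exact le_csSup hbdd ⟨u, hu, hun, rfl⟩
  have husq : ∀ i, u i ^ 2 ≤ β i ^ 2 := by
    intro i
    nlinarith [habs i, abs_nonneg (u i), sq_abs (u i)]
  -- facts about the truncation index
  have hsumβ : (1 : ℝ) ≤ ∑ i, β i ^ 2 := by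
    have h0 : (0 : ℝ) ≤ ∑ i, β i ^ 2 := Finset.sum_nonneg fun i _ => sq_nonneg (β i)
    have h := Real.sq_sqrt h0
    nlinarith [hβnorm]
  have hpm : (1 : ℝ) ≤ psum β m := by
    have h : psum β m = ∑ i, β i ^ 2 := by
      unfold psum
      rw [Finset.filter_true_of_mem fun i _ => i.isLt]
    rw [h]; exact hsumβ
  set I := tIdx β with hIdef
  have hne : {k | 1 ≤ psum β k}.Nonempty := ⟨m, hpm⟩
  have hIm : I ≤ m := Nat.sInf_le hpm
  have hImem : 1 ≤ psum β I := Nat.sInf_mem hne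
  have hp0 : psum β 0 = 0 := by
    unfold psum
    rw [Finset.filter_false_of_mem fun i _ => by omega]
    simp
  have hI1 : 1 ≤ I := by
    by_contra h
    push_neg at h
    interval_cases I
    rw [hp0] at hImem; linarith
  have hpI1 : psum β (I - 1) < 1 := by
    have h := Nat.notMem_of_lt_sInf (s := {k | 1 ≤ psum β k}) (by omega : I - 1 < I)
    simpa [Set.mem_setOf_eq, not_le] using h
  -- squared values of the truncation
  have htsq : ∀ i : Fin m, (utrunc β i) ^ 2 =
      if (i : ℕ) + 1 < I then β i ^ 2
      else if (i : ℕ) + 1 = I then 1 - psum β (I - 1) else 0 := by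
    intro i
    unfold utrunc
    rw [← hIdef]
    split_ifs with h1 h2
    · rfl
    · exact Real.sq_sqrt (by linarith)
    · norm_num
  -- set up the ℕ-indexed sequences
  set W : ℕ → ℝ := extz (fun i => dt i ^ 2) with hW
  set A : ℕ → ℝ := fun k =>
    extz (fun i => (utrunc β i) ^ 2) k - extz (fun i => u i ^ 2) k with hA
  have hWpos : ∀ i, 0 ≤ W i := by
    intro i
    rcases lt_or_ge i m with h | h
    · rw [hW, extz_lt _ h]; exact sq_nonneg _
    · rw [hW, extz_ge _ h]
  have hWmono : ∀ i, W (i + 1) ≤ W i := by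
    intro i
    rcases lt_or_ge (i + 1) m with h1 | h1
    · rw [hW, extz_lt _ h1, extz_lt _ (by omega : i < m)]
      exact pow_le_pow_left₀ (le_of_lt (hdt _)) (hmono ⟨i, by omega⟩ ⟨i + 1, h1⟩ (by simp)) 2
    · rw [hW, extz_ge _ h1]; exact hWpos i
  -- partial sums of the u-squares are at most 1
  have hextz_nonneg : ∀ (v : Fin m → ℝ) (i : ℕ), 0 ≤ extz (fun j => v j ^ 2) i := by
    intro v i
    rcases lt_or_ge i m with h | h
    · rw [extz_lt _ h]; exact sq_nonneg _
    · rw [extz_ge _ h]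
  have hVle : ∀ k, ∑ i ∈ Finset.range k, extz (fun i => u i ^ 2) i ≤ 1 := by
    intro k
    rcases le_or_gt k m with h | h
    · calc ∑ i ∈ Finset.range k, extz (fun i => u i ^ 2) i
          ≤ ∑ i ∈ Finset.range m, extz (fun i => u i ^ 2) i :=
            Finset.sum_le_sum_of_subset_of_nonneg (Finset.range_subset_range.2 h)
              (fun i _ _ => hextz_nonneg u i)
        _ = ∑ j, u j ^ 2 := (sum_fin_eq_sum_range_extz _).symm
        _ ≤ 1 := hun
    · have heq : ∑ i ∈ Finset.range k, extz (fun i => u i ^ 2) i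
          = ∑ i ∈ Finset.range m, extz (fun i => u i ^ 2) i := by
        symm
        apply Finset.sum_subset (Finset.range_subset_range.2 (le_of_lt h))
        intro x _ hx
        simp only [Finset.mem_range, not_lt] at hx
        exact extz_ge _ hx
      rw [heq, ← sum_fin_eq_sum_range_extz]
      exact hun
  -- the truncation has total (squared) mass exactly 1 past index I
  have hTval : ∀ k, I ≤ k →
      ∑ i ∈ Finset.range k, extz (fun i => (utrunc β i) ^ 2) i = 1 := by
    intro k hk
    have hsplit : ∑ i ∈ Finset.range k, extz (fun i => (utrunc β i) ^ 2) i
        = ∑ i ∈ Finset.range I, extz (fun i => (utrunc β i) ^ 2) i := by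
      symm
      apply Finset.sum_subset (Finset.range_subset_range.2 hk)
      intro x _ hx
      simp only [Finset.mem_range, not_lt] at hx
      rcases lt_or_ge x m with hxm | hxm
      · rw [extz_lt _ hxm]
        simp only [htsq ⟨x, hxm⟩, Fin.val_mk]
        rw [if_neg (by omega), if_neg (by omega)]
      · exact extz_ge _ hxm
    rw [hsplit]
    have hIs : I = (I - 1) + 1 := by omega
    rw [hIs, Finset.sum_range_succ]
    have hm1 : I - 1 < m := by omega
    have hlast : extz (fun i => (utrunc β i) ^ 2) (I - 1) = 1 - psum β (I - 1) := by
      rw [extz_lt _ hm1]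
      simp only [htsq ⟨I - 1, hm1⟩, Fin.val_mk]
      rw [if_neg (by omega), if_pos (by omega)]
    have hfirst : ∑ i ∈ Finset.range (I - 1), extz (fun i => (utrunc β i) ^ 2) i
        = psum β (I - 1) := by
      rw [psum_eq_sum_range β (by omega : I - 1 ≤ m)]
      refine Finset.sum_congr rfl fun i hi => ?_
      simp only [Finset.mem_range] at hi
      have him : i < m := by omega
      rw [extz_lt _ him, extz_lt _ him]
      simp only [htsq ⟨i, him⟩, Fin.val_mk]
      rw [if_pos (by omega)]
    rw [hlast, hfirst]
    ring
  -- partial sums of A are nonneg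
  have hG : ∀ k, 0 ≤ ∑ i ∈ Finset.range k, A i := by
    intro k
    rw [hA, Finset.sum_sub_distrib]
    rcases lt_or_ge k I with hk | hk
    · have hterm : ∀ i ∈ Finset.range k,
          extz (fun i => u i ^ 2) i ≤ extz (fun i => (utrunc β i) ^ 2) i := by
        intro i hi
        simp only [Finset.mem_range] at hi
        rcases lt_or_ge i m with him | him
        · rw [extz_lt _ him, extz_lt _ him]
          simp only [htsq ⟨i, him⟩, Fin.val_mk]
          rw [if_pos (by omega)]
          exact husq ⟨i, him⟩
        · rw [extz_ge _ him, extz_ge _ him]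
      linarith [Finset.sum_le_sum hterm]
    · rw [hTval k hk]
      linarith [hVle k]
  -- conclude via Abel summation
  have hkey : 0 ≤ ∑ i ∈ Finset.range m, W i * A i := abel_nonneg m W A hWpos hWmono hG
  have hprod : ∀ i ∈ Finset.range m, W i * A i =
      extz (fun i => (dt i * utrunc β i) ^ 2) i - extz (fun i => (dt i * u i) ^ 2) i := by
    intro i hi
    simp only [Finset.mem_range] at hi
    rw [hW, hA]
    simp only [extz_lt _ hi]
    ring
  rw [Finset.sum_congr rfl hprod, Finset.sum_sub_distrib,
    ← sum_fin_eq_sum_range_extz, ← sum_fin_eq_sum_range_extz] at hkey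
  exact Real.sqrt_le_sqrt (by linarith)
end

section
/- Let β ∈ ℝ^m have strictly positive entries with ‖β‖₂ ≥ 1, and let c ∈ ℝ^m have nonnegative non-increasing entries. Then over all p in the simplex Δ^{m−1} satisfying p_i ≤ β_i² for each i, the linear functional c^T p is maximized by p = T(β)^{.2} (the entrywise square of the unit truncation of β), with maximal value ∑_i c_i T(β)_i². -/
open Finset

lemma psum_zero {n : ℕ} (v : Fin n → ℝ) : psum v 0 = 0 := by
  simp [psum]

lemma psum_succ {n : ℕ} (v : Fin n → ℝ) (k : ℕ) :
    psum v (k + 1) = psum v k + (if h : k < n then (v ⟨k, h⟩) ^ 2 else 0) := by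
  unfold psum
  by_cases h : k < n
  · rw [dif_pos h]
    have hset : Finset.univ.filter (fun i : Fin n => i.val < k + 1)
        = insert (⟨k, h⟩ : Fin n) (Finset.univ.filter (fun i : Fin n => i.val < k)) := by
      ext i
      simp only [Finset.mem_filter, Finset.mem_insert, Finset.mem_univ, true_and, Fin.ext_iff]
      omega
    rw [hset, Finset.sum_insert (by simp)]
    ring
  · rw [dif_neg h]
    have hset : Finset.univ.filter (fun i : Fin n => i.val < k + 1)
        = Finset.univ.filter (fun i : Fin n => i.val < k) := by
      ext i
      have := i.isLt
      simp only [Finset.mem_filter, Finset.mem_univ, true_and]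
      omega
    rw [hset]; ring

/-- Abel summation inequality. -/
lemma abel_aux (m : ℕ) (f d : ℕ → ℝ)
    (hf : ∀ k, f (k + 1) ≤ f k)
    (hD : ∀ k, ∑ j ∈ Finset.range k, d j ≤ 0)
    (hDm : ∑ j ∈ Finset.range m, d j = 0) :
    ∑ k ∈ Finset.range m, f k * d k ≤ 0 := by
  set D : ℕ → ℝ := fun k => ∑ j ∈ Finset.range k, d j with hDdef
  have hd : ∀ k, d k = D (k + 1) - D k := by
    intro k
    simp [hDdef, Finset.sum_range_succ]
  have h1 : ∑ k ∈ Finset.range m, (f (k + 1) * D (k + 1) - f k * D k)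
      = f m * D m - f 0 * D 0 := Finset.sum_range_sub (fun k => f k * D k) m
  have h2 : ∑ k ∈ Finset.range m, f k * d k
      = (f m * D m - f 0 * D 0) - ∑ k ∈ Finset.range m, (f (k + 1) - f k) * D (k + 1) := by
    rw [← h1, ← Finset.sum_sub_distrib]
    apply Finset.sum_congr rfl
    intro k _
    rw [hd k]; ring
  have hD0 : D 0 = 0 := by simp [hDdef]
  have hDmm : D m = 0 := hDm
  have h3 : 0 ≤ ∑ k ∈ Finset.range m, (f (k + 1) - f k) * D (k + 1) := by
    apply Finset.sum_nonneg
    intro k _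
    nlinarith [mul_nonneg (sub_nonneg.2 (hf k)) (neg_nonneg.2 (hD (k + 1)))]
  rw [h2, hD0, hDmm]
  linarith

/-- the entrywise square of the unit truncation of `β` is the maximizer of the
linear program `max { cᵀp : p ∈ Δ^{m−1}, p_i ≤ β_i² }` for nonnegative non-increasing `c`. -/
theorem greedy_linear_program
    {m : ℕ} (β c : Fin m → ℝ)
    (hβ : ∀ i, 0 < β i) (hβnorm : 1 ≤ Real.sqrt (∑ i, (β i) ^ 2))
    (hc : ∀ i, 0 ≤ c i) (hmono : ∀ i j : Fin m, i ≤ j → c j ≤ c i) :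
    (∀ i, (utrunc β i) ^ 2 ≤ (β i) ^ 2) ∧
    (∑ i, (utrunc β i) ^ 2 = 1) ∧
    (∀ p : Fin m → ℝ, (∀ i, 0 ≤ p i) → (∑ i, p i = 1) → (∀ i, p i ≤ (β i) ^ 2) →
      ∑ i, c i * p i ≤ ∑ i, c i * (utrunc β i) ^ 2) := by
  have hS0 : (0:ℝ) ≤ ∑ i, (β i) ^ 2 := Finset.sum_nonneg fun i _ => sq_nonneg _
  have hS1 : 1 ≤ ∑ i, (β i) ^ 2 := by
    nlinarith [Real.sq_sqrt hS0, Real.sqrt_nonneg (∑ i, (β i) ^ 2)]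
  have hpsm : psum β m = ∑ i, (β i) ^ 2 := by
    unfold psum
    congr 1
    ext i
    simp [i.isLt]
  have hm1 : 1 ≤ psum β m := by rw [hpsm]; exact hS1
  have hmem : m ∈ {k | 1 ≤ psum β k} := hm1
  have hIm : tIdx β ≤ m := Nat.sInf_le hmem
  have hI1 : 1 ≤ psum β (tIdx β) := Nat.sInf_mem (⟨m, hmem⟩ : Set.Nonempty {k | 1 ≤ psum β k})
  have hI0 : 0 < tIdx β := by
    rcases Nat.eq_zero_or_pos (tIdx β) with h | h
    · exfalso
      rw [h, psum_zero] at hI1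
      linarith
    · exact h
  have hIlt : psum β (tIdx β - 1) < 1 := by
    have hlt : tIdx β - 1 < sInf {k | 1 ≤ psum β k} := by
      have : tIdx β - 1 < tIdx β := by omega
      exact this
    have hnot := Nat.notMem_of_lt_sInf hlt
    simp only [Set.mem_setOf_eq, not_le] at hnot
    exact hnot
  have hI1m : tIdx β - 1 < m := by omega
  have hpsI : psum β (tIdx β) = psum β (tIdx β - 1) + (β ⟨tIdx β - 1, hI1m⟩) ^ 2 := by
    have h := psum_succ β (tIdx β - 1)
    rw [dif_pos hI1m] at h
    rw [show tIdx β - 1 + 1 = tIdx β by omega] at h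
    exact h
  have hlastle : 1 - psum β (tIdx β - 1) ≤ (β ⟨tIdx β - 1, hI1m⟩) ^ 2 := by
    rw [hpsI] at hI1; linarith
  have hlastpos : 0 ≤ 1 - psum β (tIdx β - 1) := by linarith
  -- Claim 1
  have claim1 : ∀ i, (utrunc β i) ^ 2 ≤ (β i) ^ 2 := by
    intro i
    unfold utrunc
    split_ifs with h1 h2
    · exact le_rfl
    · rw [Real.sq_sqrt hlastpos]
      have hie : i = (⟨tIdx β - 1, hI1m⟩ : Fin m) := by
        apply Fin.ext
        show (i : ℕ) = tIdx β - 1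
        omega
      rw [hie]
      exact hlastle
    · simpa using sq_nonneg (β i)
  -- the q sequence
  set qv : ℕ → ℝ := fun k => if h : k < m then (utrunc β ⟨k, h⟩) ^ 2 else 0 with hqvdef
  have hQ : ∀ k, ∑ j ∈ Finset.range k, qv j = if k < tIdx β then psum β k else 1 := by
    intro k
    induction k with
    | zero => simp [psum_zero, hI0]
    | succ k ih =>
      rw [Finset.sum_range_succ, ih]
      rcases lt_trichotomy (k + 1) (tIdx β) with h | h | h
      · have hk : k < tIdx β := by omega
        have hkm : k < m := by omega
        rw [if_pos hk, if_pos h]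
        have hqk : qv k = (β ⟨k, hkm⟩) ^ 2 := by
          simp only [hqvdef, dif_pos hkm]
          unfold utrunc
          rw [if_pos (show ((⟨k, hkm⟩ : Fin m) : ℕ) + 1 < tIdx β from h)]
        rw [hqk, psum_succ β k, dif_pos hkm]
      · have hk : k < tIdx β := by omega
        have hkm : k < m := by omega
        rw [if_pos hk, if_neg (by omega)]
        have hqk : qv k = 1 - psum β (tIdx β - 1) := by
          simp only [hqvdef, dif_pos hkm]
          unfold utrunc
          rw [if_neg (show ¬ ((⟨k, hkm⟩ : Fin m) : ℕ) + 1 < tIdx β by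
                show ¬ (k + 1 < tIdx β); omega),
            if_pos (show ((⟨k, hkm⟩ : Fin m) : ℕ) + 1 = tIdx β from h),
            Real.sq_sqrt hlastpos]
        rw [hqk, show tIdx β - 1 = k by omega]
        ring
      · rw [if_neg (by omega), if_neg (by omega)]
        have hqk : qv k = 0 := by
          by_cases hkm : k < m
          · simp only [hqvdef, dif_pos hkm]
            unfold utrunc
            rw [if_neg (show ¬ ((⟨k, hkm⟩ : Fin m) : ℕ) + 1 < tIdx β by
                show ¬ (k + 1 < tIdx β); omega),
              if_neg (show ¬ ((⟨k, hkm⟩ : Fin m) : ℕ) + 1 = tIdx β by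
                show ¬ (k + 1 = tIdx β); omega)]
            norm_num
          · simp [hqvdef, dif_neg hkm]
        rw [hqk]; ring
  have hQm : ∑ j ∈ Finset.range m, qv j = 1 := by
    rw [hQ m, if_neg (by omega)]
  have claim2 : ∑ i, (utrunc β i) ^ 2 = 1 := by
    rw [← hQm, ← Fin.sum_univ_eq_sum_range qv m]
    apply Finset.sum_congr rfl
    intro i _
    simp [hqvdef, i.isLt]
  refine ⟨claim1, claim2, ?_⟩
  -- Claim 3
  intro p hp0 hp1 hple
  set pv : ℕ → ℝ := fun k => if h : k < m then p ⟨k, h⟩ else 0 with hpvdef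
  have hPm : ∑ j ∈ Finset.range m, pv j = 1 := by
    rw [← hp1, ← Fin.sum_univ_eq_sum_range pv m]
    apply Finset.sum_congr rfl
    intro i _
    simp [hpvdef, i.isLt]
  have hpv0 : ∀ k, 0 ≤ pv k := by
    intro k
    simp only [hpvdef]
    split_ifs with h
    · exact hp0 _
    · exact le_rfl
  have hpsum_range : ∀ k, psum β k = ∑ j ∈ Finset.range k,
      (if h : j < m then (β ⟨j, h⟩) ^ 2 else 0) := by
    intro k
    induction k with
    | zero => simp [psum_zero]
    | succ k ih => rw [Finset.sum_range_succ, ← ih, psum_succ]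
  have hPle : ∀ k, ∑ j ∈ Finset.range k, pv j ≤ 1 := by
    intro k
    have h1 : ∑ j ∈ Finset.range k, pv j ≤ ∑ j ∈ Finset.range (max k m), pv j :=
      Finset.sum_le_sum_of_subset_of_nonneg
        (Finset.range_subset_range.2 (le_max_left _ _)) (fun j _ _ => hpv0 j)
    have h2 : ∑ j ∈ Finset.range m, pv j = ∑ j ∈ Finset.range (max k m), pv j := by
      apply Finset.sum_subset (Finset.range_subset_range.2 (le_max_right _ _))
      intro j hj hj2
      simp only [Finset.mem_range, not_lt] at hj2
      simp [hpvdef, dif_neg (by omega : ¬ j < m)]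
    rw [hPm] at h2
    linarith
  have hD : ∀ k, ∑ j ∈ Finset.range k, (pv j - qv j) ≤ 0 := by
    intro k
    rw [Finset.sum_sub_distrib, hQ k]
    split_ifs with hk
    · have hle : ∑ j ∈ Finset.range k, pv j ≤ psum β k := by
        rw [hpsum_range k]
        apply Finset.sum_le_sum
        intro j _
        simp only [hpvdef]
        split_ifs with h
        · exact hple _
        · exact le_rfl
      linarith
    · linarith [hPle k]
  have hDm : ∑ j ∈ Finset.range m, (pv j - qv j) = 0 := by
    rw [Finset.sum_sub_distrib, hPm, hQm]; ring
  set f : ℕ → ℝ := fun k => if h : k < m then c ⟨k, h⟩ else 0 with hfdef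
  have hf : ∀ k, f (k + 1) ≤ f k := by
    intro k
    simp only [hfdef]
    by_cases h1 : k + 1 < m
    · rw [dif_pos h1, dif_pos (by omega : k < m)]
      exact hmono _ _ (by simp [Fin.le_def])
    · by_cases h2 : k < m
      · rw [dif_neg h1, dif_pos h2]
        exact hc _
      · rw [dif_neg h1, dif_neg h2]
  have key := abel_aux m f (fun k => pv k - qv k) hf hD hDm
  have hstep : ∑ i, (c i * p i - c i * (utrunc β i) ^ 2)
      = ∑ k ∈ Finset.range m, f k * (pv k - qv k) := by
    rw [← Fin.sum_univ_eq_sum_range (fun k => f k * (pv k - qv k)) m]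
    apply Finset.sum_congr rfl
    intro i _
    simp only [hfdef, hpvdef, hqvdef, dif_pos i.isLt]
    ring
  rw [← sub_nonpos, ← Finset.sum_sub_distrib, hstep]
  exact key
end

section
/- Let Ū ⊆ ℝ^{2m} be a nontrivial subspace such that for each i ∈ [m], sup { ū_{2i−1}² + ū_{2i}² : ū ∈ Ū, ‖ū‖₂ ≤ 1 } ≤ β_i² for some β ∈ ℝ^m with strictly positive entries and ‖β‖₂ ≥ 1. Let d̃ ∈ ℝ^m have strictly positive non-increasing entries, D̃ = Diag(d̃) ∈ ℝ^{m×m}, and let D̄ = Diag(d̄) ∈ ℝ^{2m×2m} where d̄_{2i−1} = d̄_{2i} = d̃_i. Then ‖D̄ proj_Ū‖ ≤ ‖D̃ T(β)‖₂, where T(β) is the unit truncation of β. -/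
open Finset

lemma sum_fin_lt {m : ℕ} (k : ℕ) (g : Fin m → ℝ) :
    ∑ i ∈ Finset.univ.filter (fun i : Fin m => i.val < k), g i
      = ∑ j ∈ Finset.range k, (if h : j < m then g ⟨j, h⟩ else 0) := by
  induction k with
  | zero => simp
  | succ k ih =>
    rw [Finset.sum_range_succ, ← ih]
    by_cases hk : k < m
    · have hins : Finset.univ.filter (fun i : Fin m => i.val < k + 1)
        = insert ⟨k, hk⟩ (Finset.univ.filter (fun i : Fin m => i.val < k)) := by
        ext i
        simp [Fin.ext_iff]
        omega
      rw [hins, Finset.sum_insert (by simp)]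
      rw [dif_pos hk]
      ring
    · have heq : Finset.univ.filter (fun i : Fin m => i.val < k + 1)
        = Finset.univ.filter (fun i : Fin m => i.val < k) := by
        ext i
        have := i.isLt
        simp
        omega
      rw [heq, dif_neg hk]
      ring

lemma sum_range_double (f : ℕ → ℝ) (n : ℕ) :
    ∑ j ∈ Finset.range (2 * n), f j = ∑ i ∈ Finset.range n, (f (2 * i) + f (2 * i + 1)) := by
  induction n with
  | zero => simp
  | succ n ih =>
    have h : 2 * (n + 1) = (2 * n + 1) + 1 := by ring
    rw [h, Finset.sum_range_succ, Finset.sum_range_succ, ih, Finset.sum_range_succ]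
    ring

lemma abel_le (c x : ℕ → ℝ) (hc : ∀ i j : ℕ, i ≤ j → c j ≤ c i) :
    ∀ n : ℕ, (∀ k, k ≤ n → ∑ i ∈ Finset.range k, x i ≤ 0) →
      ∑ i ∈ Finset.range n, c i * x i ≤ c n * ∑ i ∈ Finset.range n, x i := by
  intro n
  induction n with
  | zero => simp
  | succ n ih =>
    intro h
    have h1 := ih (fun k hk => h k (le_trans hk (Nat.le_succ n)))
    have hS : ∑ i ∈ Finset.range (n + 1), x i ≤ 0 := h (n + 1) le_rfl
    have hc1 : c (n + 1) ≤ c n := hc n (n + 1) (Nat.le_succ n)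
    have h2 : c n * (∑ i ∈ Finset.range (n + 1), x i)
        ≤ c (n + 1) * (∑ i ∈ Finset.range (n + 1), x i) :=
      mul_le_mul_of_nonpos_right hc1 hS
    rw [Finset.sum_range_succ x] at h2 hS
    rw [Finset.sum_range_succ, Finset.sum_range_succ]
    nlinarith [h1, h2]

/-- the soft incoherent projection bound, the `ℝ^{2m}` (complex) analogue of
the incoherent-projection operator norm bound.  The operator norm `‖D̄ proj_Ū‖` is expressed
as the supremum of `‖D̄ ū‖₂` over `ū ∈ Ū` with `‖ū‖₂ ≤ 1`; `D̄` has the doubled diagonal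
`d̄_{2i−1} = d̄_{2i} = d̃_i`. -/
theorem soft_incoherent_projection_bound
    {m : ℕ} (U : Submodule ℝ (Fin (2 * m) → ℝ)) (hU : U ≠ ⊥)
    (β : Fin m → ℝ) (hβpos : ∀ i, 0 < β i)
    (hβnorm : 1 ≤ Real.sqrt (∑ i, (β i) ^ 2))
    (hcoh : ∀ i : Fin m, ∀ u ∈ U, (∑ k, (u k) ^ 2) ≤ 1 →
      (u ⟨2 * i.val, by have := i.2; omega⟩) ^ 2 +
        (u ⟨2 * i.val + 1, by have := i.2; omega⟩) ^ 2 ≤ (β i) ^ 2)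
    (dt : Fin m → ℝ) (hdt : ∀ i, 0 < dt i)
    (hmono : ∀ i j : Fin m, i ≤ j → dt j ≤ dt i) :
    ∀ u ∈ U, (∑ k, (u k) ^ 2) ≤ 1 →
      Real.sqrt (∑ k : Fin (2 * m), (dt ⟨k.val / 2, by have := k.2; omega⟩ * u k) ^ 2)
        ≤ Real.sqrt (∑ i : Fin m, (dt i * utrunc β i) ^ 2) := by
  intro u hu hnorm
  -- basic facts about β
  have hsum0 : (0:ℝ) ≤ ∑ i, (β i) ^ 2 := by positivity
  have hs1 : (1:ℝ) ≤ ∑ i, (β i) ^ 2 := by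
    nlinarith [Real.sq_sqrt hsum0, Real.sqrt_nonneg (∑ i, (β i) ^ 2)]
  -- ℕ-indexed versions of all sequences
  set I := tIdx β with hIdef
  let b : ℕ → ℝ := fun j => if h : j < m then (β ⟨j, h⟩) ^ 2 else 0
  let tt : ℕ → ℝ := fun j => if h : j < m then (utrunc β ⟨j, h⟩) ^ 2 else 0
  let cc : ℕ → ℝ := fun j => if h : j < m then (dt ⟨j, h⟩) ^ 2 else 0
  let uu : ℕ → ℝ := fun j => if h : j < 2 * m then (u ⟨j, h⟩) ^ 2 else 0
  let pp : ℕ → ℝ := fun j => uu (2 * j) + uu (2 * j + 1)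
  -- psum as range sum over b
  have hpsum : ∀ k, psum β k = ∑ j ∈ Finset.range k, b j := by
    intro k
    exact sum_fin_lt k (fun i => (β i) ^ 2)
  -- properties of the truncation index
  have hpsum_m : psum β m = ∑ i, (β i) ^ 2 := by
    unfold psum
    rw [Finset.filter_true_of_mem (fun i _ => i.isLt)]
  have hmem : m ∈ {k | 1 ≤ psum β k} := by
    simp only [Set.mem_setOf_eq, hpsum_m]; exact hs1
  have hIle : I ≤ m := Nat.sInf_le hmem
  have hImem : 1 ≤ psum β I := Nat.sInf_mem (Set.nonempty_of_mem hmem)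
  have hIpos : 0 < I := by
    rcases Nat.eq_zero_or_pos I with h0 | h; swap; · exact h
    rw [h0] at hImem
    simp [psum] at hImem
    linarith
  have hlt : ∀ k, k < I → psum β k < 1 := by
    intro k hk
    have := Nat.notMem_of_lt_sInf (by exact hk : k < sInf {k | 1 ≤ psum β k})
    simp only [Set.mem_setOf_eq, not_le] at this
    exact this
  have hprev : psum β (I - 1) < 1 := hlt (I - 1) (by omega)
  -- values of tt
  have htt_eq : ∀ j, j + 1 < I → tt j = b j := by
    intro j hj
    have hjm : j < m := by omega
    simp only [tt, b, dif_pos hjm, utrunc]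
    rw [if_pos (by exact hj)]
  have htt_last : tt (I - 1) = 1 - psum β (I - 1) := by
    have hjm : I - 1 < m := by omega
    simp only [tt, dif_pos hjm, utrunc]
    rw [if_neg (by omega), if_pos (by omega)]
    exact Real.sq_sqrt (by linarith)
  have htt_nonneg : ∀ j, 0 ≤ tt j := by
    intro j
    simp only [tt]
    split
    · positivity
    · exact le_refl 0
  have hpp_nonneg : ∀ j, 0 ≤ pp j := by
    intro j
    have h1 : 0 ≤ uu (2 * j) := by simp only [uu]; split <;> positivity
    have h2 : 0 ≤ uu (2 * j + 1) := by simp only [uu]; split <;> positivity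
    simpa [pp] using add_nonneg h1 h2
  -- pp ≤ b pointwise
  have hpb : ∀ j, pp j ≤ b j := by
    intro j
    by_cases hj : j < m
    · have h2 : 2 * j < 2 * m := by omega
      have h3 : 2 * j + 1 < 2 * m := by omega
      have := hcoh ⟨j, hj⟩ u hu hnorm
      simp only [pp, uu, b, dif_pos hj, dif_pos h2, dif_pos h3]
      exact this
    · have h2 : ¬ (2 * j < 2 * m) := by omega
      have h3 : ¬ (2 * j + 1 < 2 * m) := by omega
      simp [pp, uu, b, hj, h2, h3]
  -- total sum of pp is at most 1
  have hppm : ∑ j ∈ Finset.range m, pp j = ∑ k, (u k) ^ 2 := by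
    rw [show (∑ j ∈ Finset.range m, pp j) = ∑ j ∈ Finset.range (2 * m), uu j from
      (sum_range_double uu m).symm]
    rw [Fin.sum_univ_eq_sum_range uu (2 * m) |>.symm] at *
    apply Finset.sum_congr rfl
    intro k _
    simp [uu, k.isLt]
  have hpp1 : ∀ k, k ≤ m → ∑ j ∈ Finset.range k, pp j ≤ 1 := by
    intro k hk
    have : ∑ j ∈ Finset.range k, pp j ≤ ∑ j ∈ Finset.range m, pp j :=
      Finset.sum_le_sum_of_subset_of_nonneg (Finset.range_subset_range.2 hk)
        (fun j _ _ => hpp_nonneg j)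
    rw [hppm] at this
    linarith
  -- prefix dominance: ∑ pp ≤ ∑ tt on range k for k ≤ m
  have hpref : ∀ k, k ≤ m → ∑ j ∈ Finset.range k, pp j ≤ ∑ j ∈ Finset.range k, tt j := by
    intro k hk
    by_cases hkI : k < I
    · have hbt : ∑ j ∈ Finset.range k, tt j = ∑ j ∈ Finset.range k, b j := by
        apply Finset.sum_congr rfl
        intro j hj
        exact htt_eq j (by simp at hj; omega)
      rw [hbt]
      exact Finset.sum_le_sum (fun j _ => hpb j)
    · push_neg at hkI
      have h1 : ∑ j ∈ Finset.range I, tt j ≤ ∑ j ∈ Finset.range k, tt j :=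
        Finset.sum_le_sum_of_subset_of_nonneg (Finset.range_subset_range.2 hkI)
          (fun j _ _ => htt_nonneg j)
      have hI1 : I = (I - 1) + 1 := by omega
      have h2 : ∑ j ∈ Finset.range I, tt j = 1 := by
        rw [hI1, Finset.sum_range_succ, htt_last]
        have h3 : ∑ j ∈ Finset.range (I - 1), tt j = ∑ j ∈ Finset.range (I - 1), b j := by
          apply Finset.sum_congr rfl
          intro j hj
          exact htt_eq j (by simp at hj; omega)
        rw [h3, ← hpsum]
        ring
      have := hpp1 k hk
      linarith
  -- cc is antitone and nonneg
  have hcc : ∀ i j : ℕ, i ≤ j → cc j ≤ cc i := by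
    intro i j hij
    by_cases hjm : j < m
    · have him : i < m := by omega
      have h1 := hmono ⟨i, him⟩ ⟨j, hjm⟩ (by exact hij)
      have h2 := hdt (⟨j, hjm⟩ : Fin m)
      simp only [cc, dif_pos hjm, dif_pos him]
      nlinarith
    · simp only [cc, dif_neg hjm]
      split
      · positivity
      · exact le_refl 0
  -- the LP / Abel step
  have habel := abel_le cc (fun j => pp j - tt j) hcc m
    (by
      intro k hk
      have := hpref k hk
      rw [Finset.sum_sub_distrib]
      linarith)
  have hccm : cc m = 0 := by simp [cc]
  rw [hccm, zero_mul] at habel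
  have hkey : ∑ j ∈ Finset.range m, cc j * pp j ≤ ∑ j ∈ Finset.range m, cc j * tt j := by
    have : ∑ j ∈ Finset.range m, cc j * (pp j - tt j)
        = ∑ j ∈ Finset.range m, cc j * pp j - ∑ j ∈ Finset.range m, cc j * tt j := by
      rw [← Finset.sum_sub_distrib]
      apply Finset.sum_congr rfl
      intro j _
      ring
    linarith [habel, this ▸ habel]
  -- identify LHS and RHS with range sums
  apply Real.sqrt_le_sqrt
  have hLHS : (∑ k : Fin (2 * m), (dt ⟨k.val / 2, by have := k.2; omega⟩ * u k) ^ 2)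
      = ∑ j ∈ Finset.range m, cc j * pp j := by
    let F : ℕ → ℝ := fun j => if h : j < 2 * m
      then (dt ⟨j / 2, by omega⟩ * u ⟨j, h⟩) ^ 2 else 0
    have e0 : (∑ k : Fin (2 * m), (dt ⟨k.val / 2, by have := k.2; omega⟩ * u k) ^ 2)
        = ∑ k : Fin (2 * m), F k.val := by
      apply Finset.sum_congr rfl
      intro k _
      simp [F, k.isLt]
    rw [e0, Fin.sum_univ_eq_sum_range F (2 * m), sum_range_double F m]
    apply Finset.sum_congr rfl
    intro j hj
    have hjm : j < m := by simpa using hj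
    have h2 : 2 * j < 2 * m := by omega
    have h3 : 2 * j + 1 < 2 * m := by omega
    have e2 : 2 * j / 2 = j := by omega
    have e3 : (2 * j + 1) / 2 = j := by omega
    simp only [F, cc, pp, uu, dif_pos h2, dif_pos h3, dif_pos hjm, e2, e3]
    ring
  have hRHS : (∑ i : Fin m, (dt i * utrunc β i) ^ 2)
      = ∑ j ∈ Finset.range m, cc j * tt j := by
    let G : ℕ → ℝ := fun j => if h : j < m then (dt ⟨j, h⟩ * utrunc β ⟨j, h⟩) ^ 2 else 0
    have e0 : (∑ i : Fin m, (dt i * utrunc β i) ^ 2) = ∑ i : Fin m, G i.val := by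
      apply Finset.sum_congr rfl
      intro i _
      simp [G, i.isLt]
    rw [e0, Fin.sum_univ_eq_sum_range G m]
    apply Finset.sum_congr rfl
    intro j hj
    have hjm : j < m := by simpa using hj
    simp only [G, cc, tt, dif_pos hjm]
    ring
  rw [hLHS, hRHS]
  exact hkey
end
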